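/- Let ρ ⊂ (ℤ₊)^d be a fixed shape. Then Σ_{π : shape(π) ⊆ ρ} t^{cor(π)} q^{|π|_{ch}} = ∏_{(i₁,...,i_d) ∈ ρ} (1 − t·q^{i₁+···+i_d−d+1})^{−1}, as formal power series in t, q. -/

import Mathlib

open scoped BigOperators

noncomputable section

namespace HDP

variable {d : ℕ}

/-- The step `i → i + e_ℓ` in `ℤ₊^d` (coordinates are 0-based). -/
def step (i : Fin d → ℕ) (ℓ : Fin d) : Fin d → ℕ := Function.update i ℓ (i ℓ + 1)

/-- `p` is a directed lattice path of length `n` starting at `i`: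
each step goes from a point to the point plus a standard basis vector. -/
def IsPathFrom (i : Fin d → ℕ) (n : ℕ) (p : ℕ → Fin d → ℕ) : Prop :=
  p 0 = i ∧ ∀ t < n, ∃ ℓ, p (t + 1) = step (p t) ℓ

/-- The last passage time `G(i)`: the maximum, over directed lattice paths starting
at `i`, of the sum of the entries of `A` along the path. -/
def lpt (A : (Fin d → ℕ) → ℕ) (i : Fin d → ℕ) : ℕ :=
  sSup {s | ∃ n p, IsPathFrom i n p ∧ s = ∑ t ∈ Finset.range (n + 1), A (p t)}

/-- A `d`-dimensional partition: a finitely supported function `ℤ₊^d → ℕ`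
which is weakly decreasing in each coordinate. -/
def IsPartition (π : (Fin d → ℕ) → ℕ) : Prop :=
  (Function.support π).Finite ∧ ∀ i j : Fin d → ℕ, (∀ k, i k ≤ j k) → π j ≤ π i

/-- The set of corners of a `d`-dimensional partition `π` : points `(i, k)` of the
diagram of `π` (i.e. `1 ≤ k ≤ π i`) such that `(i + e ℓ, k)` is not in the diagram
for every `ℓ ∈ [d]`. -/
def Cor (π : (Fin d → ℕ) → ℕ) : Set ((Fin d → ℕ) × ℕ) :=
  {p | 1 ≤ p.2 ∧ p.2 ≤ π p.1 ∧ ∀ ℓ, π (step p.1 ℓ) < p.2}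

/-- The number of corners of `π`. -/
def cor (π : (Fin d → ℕ) → ℕ) : ℕ := Nat.card (Cor π)

/-- The corner-hook volume of `π`: the sum over corners `(i, k)` of
`i₁ + ⋯ + i_d - d + 1` (in 1-based coordinates; with our 0-based
coordinates this cohook length is `(∑ j, i j) + 1`). -/
def chvol (π : (Fin d → ℕ) → ℕ) : ℕ := ∑ᶠ p ∈ Cor π, ((∑ j, p.1 j) + 1)

/-- A set is down-closed for the componentwise order. -/
def DownClosed (ρ : Set (Fin d → ℕ)) : Prop :=
  ∀ i j : Fin d → ℕ, (∀ k, i k ≤ j k) → j ∈ ρ → i ∈ ρ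

/-- The set of top corners of a shape `ρ`. -/
def Cr (ρ : Set (Fin d → ℕ)) : Set (Fin d → ℕ) := {i ∈ ρ | ∀ ℓ, step i ℓ ∉ ρ}

end HDP

open HDP

/-- The product topology on formal power series (coefficientwise convergence). -/
instance mvPowerSeriesTopology (σ : Type*) : TopologicalSpace (MvPowerSeries σ ℚ) :=
  inferInstanceAs (TopologicalSpace ((σ →₀ ℕ) → ℚ))


/-! A partition `π` supported in a down-closed shape is determined by the number of its corners in
each column `i`, namely `π i - maxₗ π (i + e_ℓ)`, and these numbers may be prescribed arbitrarily
on the shape: `π` is rebuilt from them by the recursion `π i = f i + maxₗ π (i + e_ℓ)`, run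
downwards from the top of the shape. Each corner in column `i` contributes `t q^{|i|+1}`, so the
generating function factors over the columns into geometric series. -/

namespace MvPowerSeries

open WithPiTopology

variable {σ ι R : Type*} [Fintype ι]

theorem coeff_prod_pow_eq_zero [CommSemiring R] {φ : ι → MvPowerSeries σ R}
    (hφ : ∀ i, constantCoeff (φ i) = 0) {μ : σ →₀ ℕ} {f : ι → ℕ} {i : ι}
    (hi : μ.degree < f i) : coeff μ (∏ i, φ i ^ f i) = 0 := by
  classical
  apply coeff_of_lt_order
  rw [← Finset.mul_prod_erase _ _ (Finset.mem_univ i)]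
  calc (μ.degree : ℕ∞) < f i := by exact_mod_cast hi
    _ ≤ (φ i ^ f i).order := le_order_pow_of_constantCoeff_eq_zero _ (hφ i)
    _ ≤ (φ i ^ f i).order + (∏ j ∈ Finset.univ.erase i, φ j ^ f j).order := le_self_add
    _ ≤ _ := le_order_mul

theorem summable_prod_pow [CommSemiring R] [TopologicalSpace R] {φ : ι → MvPowerSeries σ R}
    (hφ : ∀ i, constantCoeff (φ i) = 0) : Summable fun f : ι → ℕ => ∏ i, φ i ^ f i := by
  classical
  refine summable_iff_summable_coeff.2 fun μ => summable_of_hasFiniteSupport ?_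
  refine (Set.finite_Iic fun _ => μ.degree).subset fun f hf => ?_
  by_contra h
  simp only [Set.mem_Iic, Pi.le_def, not_forall, not_le] at h
  obtain ⟨i, hi⟩ := h
  exact hf (coeff_prod_pow_eq_zero hφ hi)

variable [Field R] [TopologicalSpace R] [IsTopologicalRing R] [T2Space R]

theorem hasSum_pow_inv_one_sub {φ : MvPowerSeries σ R} (hφ : constantCoeff φ = 0) :
    HasSum (φ ^ ·) (1 - φ)⁻¹ := by
  convert (summable_pow_of_constantCoeff_eq_zero hφ).hasSum
  rw [MvPowerSeries.inv_eq_iff_mul_eq_one (by simp [hφ])]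
  exact tsum_pow_mul_one_sub_of_constantCoeff_eq_zero hφ

theorem hasSum_prod_pow_prod_inv_one_sub {φ : ι → MvPowerSeries σ R}
    (hφ : ∀ i, constantCoeff (φ i) = 0) :
    HasSum (fun f : ι → ℕ => ∏ i, φ i ^ f i) (∏ i, (1 - φ i)⁻¹) := by
  revert φ
  refine Fintype.induction_empty_option (P := fun ι _ => ∀ {φ : ι → MvPowerSeries σ R},
    (∀ i, constantCoeff (φ i) = 0) →
    HasSum (fun f : ι → ℕ => ∏ i, φ i ^ f i) (∏ i, (1 - φ i)⁻¹)) ?_ ?_ ?_ ι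
  · intro α β _ e ih φ hφ
    let _ := Fintype.ofEquiv β e.symm
    rw [← e.prod_comp, ← (Equiv.arrowCongr e (Equiv.refl ℕ)).hasSum_iff]
    convert ih (φ := φ ∘ e) fun i => hφ (e i) using 1
    · funext f
      exact (Fintype.prod_equiv e _ _ fun a => by simp).symm
    · rfl
  · intro φ _
    simp
  · intro α _ ih φ hφ
    have hs :
        Summable fun x : ℕ × (α → ℕ) => φ none ^ x.1 * ∏ i, φ (some i) ^ x.2 i := by
      simpa [Function.comp_def, Fintype.prod_option] using
        Equiv.piOptionEquivProd.symm.summable_iff.2 (summable_prod_pow hφ)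
    have h := (hasSum_pow_inv_one_sub (hφ none)).mul
      (ih (φ := φ ∘ some) fun i => hφ (some i)) hs
    rw [Fintype.prod_option, ← Equiv.piOptionEquivProd.symm.hasSum_iff]
    convert h using 1
    · rfl
    · funext f
      exact Fintype.prod_option _
    · rfl

end MvPowerSeries

namespace HDP

variable {d : ℕ} {s : Finset (Fin d → ℕ)}

theorem le_step (i : Fin d → ℕ) (ℓ : Fin d) : i ≤ step i ℓ := by
  intro k
  rcases eq_or_ne k ℓ with rfl | h <;> simp [step, Function.update_of_ne, *]

theorem sum_step (i : Fin d → ℕ) (ℓ : Fin d) : ∑ j, step i ℓ j = ∑ j, i j + 1 := by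
  rw [step, Finset.sum_update_of_mem (Finset.mem_univ ℓ),
    ← Finset.sum_erase_add _ _ (Finset.mem_univ ℓ), Finset.sdiff_singleton_eq_erase]
  ring

theorem exists_eq_step_of_covBy {i j : Fin d → ℕ} (h : i ⋖ j) : ∃ ℓ, j = step i ℓ := by
  obtain ⟨ℓ, hℓ, hne⟩ := Pi.covBy_iff.1 h
  refine ⟨ℓ, funext fun m => ?_⟩
  rcases eq_or_ne m ℓ with rfl | hm
  · simp [step, (Nat.covBy_iff_add_one_eq.1 hℓ).symm]
  · simp [step, Function.update_of_ne hm, hne m hm]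

theorem antitone_of_step_le {g : (Fin d → ℕ) → ℕ} (hg : ∀ i ℓ, g (step i ℓ) ≤ g i) :
    Antitone g :=
  (antitone_iff_forall_covBy g).2 fun i _ h => by
    obtain ⟨ℓ, rfl⟩ := exists_eq_step_of_covBy h
    exact hg i ℓ

theorem sub_sum_step_lt {i : Fin d → ℕ} (h : i ∈ s) (ℓ : Fin d) :
    (s.sup fun j => ∑ m, j m) + 1 - ∑ m, step i ℓ m
      < (s.sup fun j => ∑ m, j m) + 1 - ∑ m, i m := by
  have := Finset.le_sup (f := fun j : Fin d → ℕ => ∑ m, j m) h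
  simp only [sum_step] at this ⊢
  omega

def maxAbove (π : (Fin d → ℕ) → ℕ) (i : Fin d → ℕ) : ℕ :=
  Finset.univ.sup fun ℓ => π (step i ℓ)

def cornersAt (π : (Fin d → ℕ) → ℕ) (i : Fin d → ℕ) : ℕ := π i - maxAbove π i

theorem mem_Cor_iff {π : (Fin d → ℕ) → ℕ} {p : (Fin d → ℕ) × ℕ} :
    p ∈ Cor π ↔ maxAbove π p.1 < p.2 ∧ p.2 ≤ π p.1 := by
  refine ⟨fun ⟨h1, h2, h3⟩ => ⟨(Finset.sup_lt_iff h1).2 fun ℓ _ => h3 ℓ, h2⟩,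
    fun ⟨h1, h2⟩ => ⟨by omega, h2, fun ℓ => ?_⟩⟩
  exact (Finset.le_sup (f := fun ℓ => π (step p.1 ℓ)) (Finset.mem_univ ℓ)).trans_lt h1

theorem Cor_eq_map_sigma {π : (Fin d → ℕ) → ℕ} (hs : Function.support π ⊆ s) :
    Cor π = ((s.sigma fun i => Finset.Ioc (maxAbove π i) (π i)).map
      (Equiv.sigmaEquivProd _ _).toEmbedding : Set ((Fin d → ℕ) × ℕ)) := by
  ext ⟨i, k⟩
  simp only [mem_Cor_iff, Finset.coe_map, Set.mem_image, Finset.mem_coe, Finset.mem_sigma,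
    Finset.mem_Ioc, Equiv.coe_toEmbedding, Sigma.exists, Equiv.sigmaEquivProd_apply,
    Prod.mk.injEq]
  constructor
  · rintro ⟨h1, h2⟩
    exact ⟨i, k, ⟨hs (by simp; omega), h1, h2⟩, rfl, rfl⟩
  · rintro ⟨i, k, ⟨-, h1, h2⟩, rfl, rfl⟩
    exact ⟨h1, h2⟩

theorem cor_eq_sum {π : (Fin d → ℕ) → ℕ} (hs : Function.support π ⊆ s) :
    cor π = ∑ i ∈ s, cornersAt π i := by
  rw [cor, Cor_eq_map_sigma hs, Nat.card_coe_set_eq, Set.ncard_coe_finset, Finset.card_map,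
    Finset.card_sigma]
  simp [cornersAt]

theorem chvol_eq_sum {π : (Fin d → ℕ) → ℕ} (hs : Function.support π ⊆ s) :
    chvol π = ∑ i ∈ s, cornersAt π i * (∑ j, i j + 1) := by
  rw [chvol, Cor_eq_map_sigma hs, finsum_mem_coe_finset, Finset.sum_map, Finset.sum_sigma]
  simp [cornersAt]

def ofCorners (s : Finset (Fin d → ℕ)) (f : s → ℕ) (i : Fin d → ℕ) : ℕ :=
  if h : i ∈ s then f ⟨i, h⟩ + Finset.univ.sup fun ℓ => ofCorners s f (step i ℓ) else 0
termination_by (s.sup fun j => ∑ m, j m) + 1 - ∑ m, i m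
decreasing_by exact sub_sum_step_lt h ℓ

theorem ofCorners_of_mem (f : s → ℕ) {i : Fin d → ℕ} (h : i ∈ s) :
    ofCorners s f i = f ⟨i, h⟩ + maxAbove (ofCorners s f) i := by
  rw [ofCorners, dif_pos h, maxAbove]

theorem ofCorners_of_notMem (f : s → ℕ) {i : Fin d → ℕ} (h : i ∉ s) :
    ofCorners s f i = 0 := by
  rw [ofCorners, dif_neg h]

theorem support_ofCorners_subset (f : s → ℕ) : Function.support (ofCorners s f) ⊆ s :=
  fun _ hi => by_contra fun h => hi (ofCorners_of_notMem f h)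

theorem cornersAt_ofCorners (f : s → ℕ) (i : s) : cornersAt (ofCorners s f) i = f i := by
  rw [cornersAt, ofCorners_of_mem f i.2]
  exact Nat.add_sub_cancel _ _

theorem isPartition_ofCorners (hs : DownClosed (s : Set (Fin d → ℕ))) (f : s → ℕ) :
    IsPartition (ofCorners s f) := by
  refine ⟨s.finite_toSet.subset (support_ofCorners_subset f),
    fun _ _ h => antitone_of_step_le (fun i ℓ => ?_) h⟩
  by_cases h : i ∈ s
  · rw [ofCorners_of_mem f h]
    exact (Finset.le_sup (f := fun ℓ => ofCorners s f (step i ℓ)) (Finset.mem_univ ℓ)).trans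
      (Nat.le_add_left _ _)
  · rw [ofCorners_of_notMem f h, ofCorners_of_notMem f fun hs' => h (hs _ _ (le_step i ℓ) hs')]

theorem ofCorners_cornersAt {π : (Fin d → ℕ) → ℕ} (hπ : Antitone π)
    (hs : Function.support π ⊆ s) (i : Fin d → ℕ) :
    ofCorners s (fun j => cornersAt π j) i = π i := by
  by_cases h : i ∈ s
  · have hmax : maxAbove (ofCorners s fun j => cornersAt π j) i = maxAbove π i :=
      Finset.sup_congr rfl fun ℓ _ => ofCorners_cornersAt hπ hs (step i ℓ)
    have hle : maxAbove π i ≤ π i := Finset.sup_le fun ℓ _ => hπ (le_step i ℓ)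
    rw [ofCorners_of_mem _ h, hmax]
    exact Nat.sub_add_cancel hle
  · rw [ofCorners_of_notMem _ h, eq_comm, ← Function.notMem_support]
    exact fun h' => h (hs h')
termination_by (s.sup fun j => ∑ m, j m) + 1 - ∑ m, i m
decreasing_by exact sub_sum_step_lt h ℓ

def partitionEquiv (hs : DownClosed (s : Set (Fin d → ℕ))) :
    {π : (Fin d → ℕ) → ℕ // IsPartition π ∧ Function.support π ⊆ s} ≃ (s → ℕ)
    where
  toFun π i := cornersAt π.1 i
  invFun f := ⟨ofCorners s f, isPartition_ofCorners hs f, support_ofCorners_subset f⟩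
  left_inv π := Subtype.ext <| funext <|
    ofCorners_cornersAt (fun i j h => π.2.1.2 i j h) π.2.2
  right_inv f := funext (cornersAt_ofCorners f)

theorem cor_ofCorners (f : s → ℕ) : cor (ofCorners s f) = ∑ i, f i := by
  rw [cor_eq_sum (support_ofCorners_subset f), ← Finset.sum_coe_sort s]
  simp only [cornersAt_ofCorners]

theorem chvol_ofCorners (f : s → ℕ) :
    chvol (ofCorners s f) = ∑ i : s, f i * (∑ j, i.1 j + 1) := by
  rw [chvol_eq_sum (support_ofCorners_subset f), ← Finset.sum_coe_sort s]
  simp only [cornersAt_ofCorners]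

end HDP

open MvPowerSeries in
/-- With `t = X 0` and `q = X 1`; coordinates are 0-based, so the cohook exponent
`i₁ + ⋯ + i_d - d + 1` reads `(∑ j, i j) + 1`. -/
theorem cornerHook_generating_function_subshape {d : ℕ} (ρ : Set (Fin d → ℕ))
    (hfin : ρ.Finite) (hdown : DownClosed ρ) :
    ∑' π : {π : (Fin d → ℕ) → ℕ // IsPartition π ∧ Function.support π ⊆ ρ},
        (X 0 : MvPowerSeries (Fin 2) ℚ) ^ cor π.1 * (X 1 : MvPowerSeries (Fin 2) ℚ) ^ chvol π.1
      = ∏ i ∈ hfin.toFinset,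
          (1 - (X 0 : MvPowerSeries (Fin 2) ℚ) * (X 1 : MvPowerSeries (Fin 2) ℚ) ^ ((∑ j, i j) + 1))⁻¹ := by
  obtain ⟨s, rfl⟩ := hfin.exists_finset_coe
  have hterm (f : s → ℕ) :
      (X 0 : MvPowerSeries (Fin 2) ℚ) ^ cor (ofCorners s f) * X 1 ^ chvol (ofCorners s f)
        = ∏ i : s, (X 0 * X 1 ^ (∑ j, i.1 j + 1)) ^ f i := by
    simp only [cor_ofCorners, chvol_ofCorners, mul_pow, Finset.prod_mul_distrib, ← pow_mul,
      Finset.prod_pow_eq_pow_sum, mul_comm (f _)]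
  have hφ (i : s) :
      constantCoeff ((X 0 : MvPowerSeries (Fin 2) ℚ) * X 1 ^ (∑ j, i.1 j + 1)) = 0 := by
    simp
  rw [← (partitionEquiv hdown).symm.tsum_eq, Finset.finite_toSet_toFinset,
    ← Finset.prod_coe_sort]
  -- `mvPowerSeriesTopology` is the product topology, whose `T2Space` instance is scoped here.
  open MvPowerSeries.WithPiTopology in
  exact (tsum_congr hterm).trans (hasSum_prod_pow_prod_inv_one_sub hφ).tsum_eq
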